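/- arXiv:2202.12446 — 2 statements merged into one kernel-verified Lean document; each statement's English description precedes it below -/
import Mathlib

section
/- Let a ≥ 1 be an integer and b ≥ 0 an integer, and let μ be the measure on ℝ with density |x|^b·1_{[−1,1]}(x) with respect to Lebesgue measure. Let f(x) = x^a and let g be the density of the pushforward f_*μ with respect to Lebesgue measure. Then for y ∈ (0,1], g(y) = c·y^{(b+1−a)/a} for a constant c > 0 (c = 2/a if a is even and c = 1/a if a is odd, accounting for the two preimages ±y^{1/a} when a is even), and g(y) = 0 for y > 1; consequently g ∈ L^{1+ε}(ℝ) if and only if either (b+1)/a ≥ 1, or (b+1)/a < 1 and ε < (b+1)/(a−b−1). -/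
/-!
A point `y > 0` has the preimages `±y^(1/a)` under `x ↦ x^a` when `a` is even and only
`y^(1/a)` when `a` is odd; since the density of `μ` is even, each preimage carries the same mass,
and the change of variables `x = y^(1/a)` turns `|x|^b dx` on `(0, 1]` into
`a⁻¹ y^((b+1-a)/a) dy`. On `(0, 1]`, `g^(1+ε)` is then a multiple of `y^((r-1)(1+ε))` with
`r = (b+1)/a`, which is integrable exactly when `(r-1)(1+ε) > -1`.
-/

open MeasureTheory Set

theorem isNegInvariant_withDensity {G : Type*} [MeasurableSpace G] [InvolutiveNeg G]
    [MeasurableNeg G] (μ : Measure G) [μ.IsNegInvariant] {ρ : G → ENNReal}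
    (hρ : ∀ x, ρ (-x) = ρ x) : (μ.withDensity ρ).IsNegInvariant := by
  constructor
  ext s hs
  rw [Measure.neg_apply, withDensity_apply _ hs.neg, withDensity_apply _ hs,
    ← (Measure.measurePreserving_neg μ).setLIntegral_comp_preimage_emb
      (MeasurableEquiv.neg G).measurableEmbedding]
  simp only [hρ, neg_preimage, neg_neg]

section PowPushforward

variable {a : ℕ}

-- `(x ^ a)' * (y ^ (1/a))'` at `y = x ^ a`: the two Jacobians are reciprocal.
theorem natCast_mul_pow_sub_one_mul_inv_mul_rpow_eq_one (ha : a ≠ 0) {x : ℝ} (hx : 0 < x) :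
    a * x ^ (a - 1) * ((a : ℝ)⁻¹ * (x ^ a) ^ ((a : ℝ)⁻¹ - 1)) = 1 := by
  have hpow : x ^ (a - 1) * (x ^ a) ^ ((a : ℝ)⁻¹ - 1) = 1 := by
    rw [← Real.rpow_natCast_mul hx.le, ← Real.rpow_natCast, ← Real.rpow_add hx]
    convert Real.rpow_zero x using 2
    push_cast [Nat.one_le_iff_ne_zero.2 ha]
    field_simp
    ring
  rw [mul_mul_mul_comm, mul_inv_cancel₀ (Nat.cast_ne_zero.2 ha), hpow, one_mul]

theorem image_pow_preimage_inter_Ioi (ha : a ≠ 0) (A : Set ℝ) :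
    (· ^ a) '' ((· ^ a) ⁻¹' A ∩ Ioi 0) = A ∩ Ioi 0 := by
  refine Subset.antisymm (image_subset_iff.2 fun x hx => ⟨hx.1, pow_pos (mem_Ioi.1 hx.2) a⟩) ?_
  rintro y ⟨hyA, hy⟩
  have hroot : (y ^ (a⁻¹ : ℝ)) ^ a = y := Real.rpow_inv_natCast_pow (le_of_lt hy) ha
  exact ⟨y ^ (a⁻¹ : ℝ), ⟨by simpa [hroot] using hyA, Real.rpow_pos_of_pos hy _⟩, hroot⟩

theorem setLIntegral_preimage_pow_inter_Ioi (ha : a ≠ 0) {A : Set ℝ} (hA : MeasurableSet A)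
    (f : ℝ → ENNReal) :
    ∫⁻ x in (· ^ a) ⁻¹' A ∩ Ioi 0, ENNReal.ofReal (a * x ^ (a - 1)) * f (x ^ a) =
      ∫⁻ y in A ∩ Ioi 0, f y := by
  have hs : MeasurableSet ((· ^ a) ⁻¹' A ∩ Ioi (0 : ℝ)) :=
    (measurable_id.pow_const a hA).inter measurableSet_Ioi
  rw [← image_pow_preimage_inter_Ioi ha A,
    lintegral_image_eq_lintegral_abs_deriv_mul hs
      (fun x _ => (hasDerivAt_pow a x).hasDerivWithinAt)
      ((pow_left_strictMonoOn₀ ha).injOn.mono fun x hx => le_of_lt hx.2)]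
  refine setLIntegral_congr_fun hs fun x hx => ?_
  rw [abs_of_nonneg (by have : (0 : ℝ) < x := hx.2; positivity)]

theorem preimage_pow_inter_Ioi_of_even (ha : Even a) (ha0 : a ≠ 0) (A : Set ℝ) :
    (· ^ a) ⁻¹' (A ∩ Ioi 0) = ((· ^ a) ⁻¹' A ∩ Ioi 0) ∪ -((· ^ a) ⁻¹' A ∩ Ioi 0) := by
  ext x
  simp only [mem_preimage, mem_inter_iff, mem_Ioi, mem_union, mem_neg, ha.neg_pow, neg_pos,
    ha.pow_pos_iff ha0, ne_iff_lt_or_gt]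
  tauto

theorem preimage_pow_inter_Ioi_of_odd (ha : Odd a) (A : Set ℝ) :
    (· ^ a) ⁻¹' (A ∩ Ioi 0) = (· ^ a) ⁻¹' A ∩ Ioi 0 := by
  ext x
  simp only [mem_preimage, mem_inter_iff, mem_Ioi, ha.pow_pos_iff]

theorem measure_preimage_pow_inter_Ioi (μ : Measure ℝ) [μ.IsNegInvariant] (ha : a ≠ 0)
    {A : Set ℝ} (hA : MeasurableSet A) :
    μ ((· ^ a) ⁻¹' (A ∩ Ioi 0)) = (if Even a then 2 else 1) * μ ((· ^ a) ⁻¹' A ∩ Ioi 0) := by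
  have hs : MeasurableSet ((· ^ a) ⁻¹' A ∩ Ioi (0 : ℝ)) :=
    (measurable_id.pow_const a hA).inter measurableSet_Ioi
  split_ifs with h
  · have hdisj : Disjoint ((· ^ a) ⁻¹' A ∩ Ioi (0 : ℝ)) (-((· ^ a) ⁻¹' A ∩ Ioi 0)) :=
      disjoint_left.2 fun x hx hx' => by
        have : (0 : ℝ) < x := hx.2
        have : (0 : ℝ) < -x := hx'.2
        linarith
    rw [preimage_pow_inter_Ioi_of_even h ha, measure_union hdisj hs.neg, Measure.measure_neg,
      two_mul]
  · rw [preimage_pow_inter_Ioi_of_odd (Nat.not_even_iff_odd.1 h), one_mul]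

theorem restrict_Ioi_map_pow_withDensity (ha : a ≠ 0) {ρ : ℝ → ENNReal}
    (hρ : ∀ x, ρ (-x) = ρ x) :
    ((volume.withDensity ρ).map (· ^ a)).restrict (Ioi 0) =
      (volume.restrict (Ioi 0)).withDensity fun y =>
        (if Even a then 2 else 1) * ENNReal.ofReal ((a : ℝ)⁻¹ * y ^ ((a : ℝ)⁻¹ - 1)) *
          ρ (y ^ (a⁻¹ : ℝ)) := by
  have := isNegInvariant_withDensity volume hρ
  have hpow : Measurable fun x : ℝ => x ^ a := measurable_id.pow_const a
  ext A hA
  have hs : MeasurableSet ((· ^ a) ⁻¹' A ∩ Ioi (0 : ℝ)) := (hpow hA).inter measurableSet_Ioi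
  rw [Measure.restrict_apply hA, Measure.map_apply hpow (hA.inter measurableSet_Ioi),
    measure_preimage_pow_inter_Ioi _ ha hA, withDensity_apply _ hs, withDensity_apply _ hA,
    Measure.restrict_restrict hA, ← setLIntegral_preimage_pow_inter_Ioi ha hA,
    ← lintegral_const_mul' _ _ (by split_ifs <;> simp)]
  refine setLIntegral_congr_fun hs fun x hx => ?_
  have hx0 : (0 : ℝ) < x := hx.2
  have hjac : ENNReal.ofReal (a * x ^ (a - 1)) *
      ENNReal.ofReal ((a : ℝ)⁻¹ * (x ^ a) ^ ((a : ℝ)⁻¹ - 1)) = 1 := by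
    rw [← ENNReal.ofReal_mul (by positivity),
      natCast_mul_pow_sub_one_mul_inv_mul_rpow_eq_one ha hx0, ENNReal.ofReal_one]
  rw [Real.pow_rpow_inv_natCast hx0.le ha, ← one_mul ((if Even a then 2 else 1) * ρ x), ← hjac]
  ring

theorem map_pow_withDensity_indicator_Icc_Ioi_one (f : ℝ → ℝ) :
    (volume.withDensity fun x => ENNReal.ofReal ((Icc (-1) 1).indicator f x)).map (· ^ a)
      (Ioi 1) = 0 := by
  have hpow : Measurable fun x : ℝ => x ^ a := measurable_id.pow_const a
  rw [Measure.map_apply hpow measurableSet_Ioi]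
  have hsub : (· ^ a) ⁻¹' Ioi 1 ⊆ (Icc (-1 : ℝ) 1)ᶜ := fun x hx hx1 =>
    (le_abs_self _).trans (abs_pow x a ▸ pow_le_one₀ (abs_nonneg x) (abs_le.2 hx1))
      |>.not_gt hx
  refine measure_mono_null hsub ?_
  rw [withDensity_apply _ measurableSet_Icc.compl]
  exact (setLIntegral_congr_fun measurableSet_Icc.compl fun x hx => by
    rw [indicator_of_notMem hx, ENNReal.ofReal_zero]).trans lintegral_zero

theorem ofReal_indicator_Ioc_rpow_eq_indicator_Ioi (ha : a ≠ 0) (b : ℕ) (y : ℝ) :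
    ENNReal.ofReal ((Ioc 0 1).indicator
      (fun y => (if Even a then 2 else 1) / (a : ℝ) * y ^ (((b : ℝ) + 1 - a) / a)) y) =
    (Ioi 0).indicator (fun y => (if Even a then 2 else 1) *
      ENNReal.ofReal ((a : ℝ)⁻¹ * y ^ ((a : ℝ)⁻¹ - 1)) *
        ENNReal.ofReal ((Icc (-1) 1).indicator (fun x => |x| ^ b) (y ^ (a⁻¹ : ℝ)))) y := by
  rcases le_or_gt y 0 with hy | hy
  · rw [indicator_of_notMem (fun h => h.1.not_ge hy),
      indicator_of_notMem (show y ∉ Ioi 0 from not_lt.2 hy), ENNReal.ofReal_zero]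
  rw [indicator_of_mem (mem_Ioi.2 hy)]
  have hroot : 0 < y ^ (a⁻¹ : ℝ) := Real.rpow_pos_of_pos hy _
  rcases le_or_gt y 1 with hy1 | hy1
  · have hroot1 : y ^ (a⁻¹ : ℝ) ≤ 1 := Real.rpow_le_one hy.le hy1 (by positivity)
    rw [indicator_of_mem (show y ∈ Ioc 0 1 from ⟨hy, hy1⟩),
      indicator_of_mem (show y ^ (a⁻¹ : ℝ) ∈ Icc (-1) 1 from ⟨by linarith, hroot1⟩)]
    have hκ : (if Even a then 2 else 1 : ENNReal) = ENNReal.ofReal (if Even a then 2 else 1) := by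
      split_ifs <;> simp
    have hexp : ((b : ℝ) + 1 - a) / a = ((a : ℝ)⁻¹ - 1) + (a : ℝ)⁻¹ * b := by
      field_simp
      ring
    rw [hκ, ← ENNReal.ofReal_mul (by split_ifs <;> norm_num),
      ← ENNReal.ofReal_mul (by positivity), abs_of_pos hroot, ← Real.rpow_mul_natCast hy.le,
      hexp, Real.rpow_add hy]
    congr 1
    ring
  · have hroot1 : 1 < y ^ (a⁻¹ : ℝ) := Real.one_lt_rpow hy1 (by positivity)
    rw [indicator_of_notMem (fun h => h.2.not_gt hy1),
      indicator_of_notMem (fun h => h.2.not_gt hroot1), ENNReal.ofReal_zero, mul_zero]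

end PowPushforward

theorem memLp_indicator_Ioc_const_mul_rpow_iff {c α p : ℝ} (hc : c ≠ 0) (hp : 0 < p) :
    MemLp ((Ioc 0 1).indicator fun y => c * y ^ α) (ENNReal.ofReal p) volume ↔ -1 < α * p := by
  have hmeas : AEStronglyMeasurable (fun y : ℝ => c * y ^ α) (volume.restrict (Ioc 0 1)) := by
    fun_prop
  have hnorm : EqOn (fun y : ℝ => ‖c * y ^ α‖ ^ p) (fun y => |c| ^ p * y ^ (α * p)) (Ioc 0 1) :=
    fun y hy => by
      dsimp only
      rw [Real.norm_eq_abs, abs_mul, abs_of_pos (Real.rpow_pos_of_pos hy.1 α),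
        Real.mul_rpow (abs_nonneg c) (Real.rpow_nonneg hy.1.le α), ← Real.rpow_mul hy.1.le]
  rw [memLp_indicator_iff_restrict measurableSet_Ioc,
    ← integrable_norm_rpow_iff hmeas (by simpa using hp) ENNReal.ofReal_ne_top,
    ENNReal.toReal_ofReal hp.le, ← IntegrableOn, integrableOn_congr_fun hnorm measurableSet_Ioc,
    IntegrableOn, integrable_const_mul_iff (by positivity : |c| ^ p ≠ 0).isUnit, ← IntegrableOn,
    integrableOn_Ioc_iff_integrableOn_Ioo, intervalIntegral.integrableOn_Ioo_rpow_iff one_pos]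

theorem neg_one_lt_sub_one_mul_one_add_iff {r ε : ℝ} (hε : -1 ≤ ε) :
    -1 < (r - 1) * (1 + ε) ↔ 1 ≤ r ∨ (r < 1 ∧ ε < r / (1 - r)) := by
  rcases le_or_gt 1 r with hr | hr
  · simp only [hr, true_or, iff_true]
    nlinarith
  · have h1r : 0 < 1 - r := by linarith
    rw [lt_div_iff₀ h1r]
    simp only [not_le.mpr hr, hr, true_and, false_or]
    constructor <;> intro h <;> nlinarith

/-- Pushforward of the measure `|x|^b·1_{[-1,1]} dx` under `x ↦ x^a`: explicit density on the
positive axis, vanishing beyond `1`, and the exact integrability exponent. -/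
theorem stmt_4 (a b : ℕ) (ha : 1 ≤ a)
    (μ : Measure ℝ)
    (hμ : μ = volume.withDensity (fun x =>
      ENNReal.ofReal (Set.indicator (Set.Icc (-1 : ℝ) 1) (fun x => |x| ^ b) x)))
    (ν : Measure ℝ) (hν : ν = Measure.map (fun x : ℝ => x ^ a) μ)
    (c : ℝ) (hc : c = (if Even a then 2 else 1) / (a : ℝ))
    (g : ℝ → ℝ)
    (hg : g = Set.indicator (Set.Ioc (0 : ℝ) 1)
      (fun y => c * y ^ (((b : ℝ) + 1 - (a : ℝ)) / (a : ℝ)))) :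
    0 < c ∧
    ν.restrict (Set.Ioi (0 : ℝ)) = volume.withDensity (fun y => ENNReal.ofReal (g y)) ∧
    ν (Set.Ioi (1 : ℝ)) = 0 ∧
    (∀ ε : ℝ, 0 < ε →
      (MemLp g (ENNReal.ofReal (1 + ε)) volume ↔
        (1 ≤ ((b : ℝ) + 1) / (a : ℝ) ∨
          (((b : ℝ) + 1) / (a : ℝ) < 1 ∧ ε < ((b : ℝ) + 1) / ((a : ℝ) - (b : ℝ) - 1))))) := by
  have ha0 : a ≠ 0 := Nat.one_le_iff_ne_zero.1 ha
  have haR : (a : ℝ) ≠ 0 := Nat.cast_ne_zero.2 ha0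
  have hc0 : 0 < c := by rw [hc]; split_ifs <;> positivity
  subst hμ hν hg hc
  refine ⟨hc0, ?_, map_pow_withDensity_indicator_Icc_Ioi_one _, fun ε hε => ?_⟩
  · have hsymm (x : ℝ) : (Icc (-1) 1).indicator (fun x => |x| ^ b) (-x) =
        (Icc (-1) 1).indicator (fun x => |x| ^ b) x := by
      simp only [indicator, mem_Icc, abs_neg, neg_le, neg_neg, and_comm]
    rw [restrict_Ioi_map_pow_withDensity ha0 fun x => by rw [hsymm],
      ← withDensity_indicator measurableSet_Ioi]
    exact congrArg _ (funext fun y => (ofReal_indicator_Ioc_rpow_eq_indicator_Ioi ha0 b y).symm)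
  · have hr : ((b : ℝ) + 1 - a) / a = (b + 1) / a - 1 := by field_simp
    have hε' : ((b : ℝ) + 1) / (a - b - 1) = (b + 1) / a / (1 - (b + 1) / a) := by
      rw [one_sub_div haR, div_div_div_cancel_right₀ haR, sub_sub]
    rw [memLp_indicator_Ioc_const_mul_rpow_iff hc0.ne' (by linarith), hr,
      neg_one_lt_sub_one_mul_one_add_iff (by linarith), hε']
end

section
/- Let λ₁, λ₂ ∈ (0,1) with λ₁ + λ₂ < 1. Define g_j(y) = |y|^{λ_j − 1}·1_{[−1,1]}(y) for j = 1,2. Then the convolution g₁ * g₂ satisfies (g₁*g₂)(y) ≥ c·|y|^{λ₁+λ₂−1} for all 0 < |y| ≤ 1 and some constant c > 0; consequently g₁ * g₂ ∈ L^{1+ε}(ℝ) only if ε < (λ₁+λ₂)/(1−λ₁−λ₂). -/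
/-!
Both densities are bounded by `(|y|/2)^(λⱼ-1)` away from a `|y|/2`-neighbourhood of their
singularity, so for `y ≠ 0` the integrand `g₁(y-t) g₂(t)` is dominated by an integrable function.
For `0 < y ≤ 1` and `0 < t ≤ y/2` one has `g₁(y-t) ≥ y^(λ₁-1)` and `g₂(t) = t^(λ₂-1)`, hence
`(g₁ * g₂)(y) ≥ y^(λ₁-1) ∫₀^{y/2} t^(λ₂-1) dt = y^(λ₁+λ₂-1) / (λ₂ 2^λ₂)`; negative `y` follow by
evenness. If `g₁ * g₂ ∈ L^p`, the lower bound makes `y^((λ₁+λ₂-1)p)` integrable on `(0,1)`, which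
forces `(λ₁+λ₂-1)p > -1`, i.e. `p - 1 < (λ₁+λ₂)/(1-λ₁-λ₂)`.
-/

open MeasureTheory Set

lemma integrableOn_abs_rpow_Icc {s a : ℝ} (hs : -1 < s) (ha : 0 ≤ a) :
    IntegrableOn (fun x : ℝ => |x| ^ s) (Icc (-a) a) := by
  have hpos : IntegrableOn (fun x : ℝ => |x| ^ s) (Ioc 0 a) :=
    (intervalIntegral.intervalIntegrable_rpow' hs (a := 0) (b := a)).1.congr_fun
      (fun x hx => by rw [abs_of_pos hx.1]) measurableSet_Ioc
  have hneg : IntegrableOn (fun x : ℝ => |x| ^ s) (Ico (-a) 0) := by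
    simpa using hpos.comp_neg
  rw [← Ico_union_Icc_eq_Icc (neg_nonpos.mpr ha) ha]
  exact hneg.union ((integrableOn_Icc_iff_integrableOn_Ioc).mpr hpos)

lemma integral_comp_neg_sub_mul {f g : ℝ → ℝ} (hf : ∀ x, f (-x) = f x) (hg : ∀ x, g (-x) = g x)
    (y : ℝ) : ∫ t, f (-y - t) * g t = ∫ t, f (y - t) * g t := by
  rw [← integral_neg_eq_self]
  congr 1 with t
  rw [hg, show -y - -t = -(y - t) by ring, hf]

lemma neg_one_lt_mul_of_memLp_of_rpow_le {F : ℝ → ℝ} {c p s : ℝ} (hc : 0 < c) (hp : 0 < p)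
    (hF : MemLp F (ENNReal.ofReal p)) (hbound : ∀ y ∈ Ioo (0 : ℝ) 1, c * y ^ s ≤ F y) :
    -1 < s * p := by
  have hFp : Integrable (fun y => ‖F y‖ ^ p) := by
    simpa [ENNReal.toReal_ofReal hp.le] using
      hF.integrable_norm_rpow (by simpa using hp) ENNReal.ofReal_ne_top
  have hcomp : IntegrableOn (fun y : ℝ => c ^ p * y ^ (s * p)) (Ioo 0 1) := by
    refine hFp.integrableOn.mono' (by fun_prop) (ae_restrict_of_forall_mem measurableSet_Ioo ?_)
    intro y ⟨hy0, hy1⟩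
    have hcy : 0 ≤ c * y ^ s := by positivity
    calc ‖c ^ p * y ^ (s * p)‖ = (c * y ^ s) ^ p := by
          rw [Real.norm_of_nonneg (by positivity), Real.mul_rpow hc.le (by positivity),
            Real.rpow_mul hy0.le]
      _ ≤ ‖F y‖ ^ p :=
          Real.rpow_le_rpow hcy ((hbound y ⟨hy0, hy1⟩).trans (Real.le_norm_self _)) hp.le
  rw [IntegrableOn, integrable_const_mul_iff (Real.rpow_pos_of_pos hc p).ne'.isUnit] at hcomp
  exact (intervalIntegral.integrableOn_Ioo_rpow_iff one_pos).mp hcomp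

noncomputable def powerDensity (l : ℝ) : ℝ → ℝ :=
  indicator (Icc (-1) 1) fun y => |y| ^ (l - 1)

namespace powerDensity

variable {l l₁ l₂ : ℝ}

lemma nonneg (l x : ℝ) : 0 ≤ powerDensity l x :=
  indicator_nonneg (fun y _ => Real.rpow_nonneg (abs_nonneg y) _) x

@[fun_prop]
lemma measurable (l : ℝ) : Measurable (powerDensity l) :=
  (measurable_id.abs.pow_const _).indicator measurableSet_Icc

lemma integrable (hl : 0 < l) : Integrable (powerDensity l) :=
  (integrable_indicator_iff measurableSet_Icc).mpr
    (integrableOn_abs_rpow_Icc (by linarith) zero_le_one)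

lemma neg (l x : ℝ) : powerDensity l (-x) = powerDensity l x := by
  have hmem : -x ∈ Icc (-1 : ℝ) 1 ↔ x ∈ Icc (-1 : ℝ) 1 := by
    simp only [mem_Icc]
    constructor <;> rintro ⟨h₁, h₂⟩ <;> constructor <;> linarith
  simp only [powerDensity, indicator_apply, hmem, abs_neg]

lemma eq_rpow {x : ℝ} (hx : x ∈ Ioc 0 1) : powerDensity l x = x ^ (l - 1) := by
  have hx' : x ∈ Icc (-1 : ℝ) 1 := ⟨by linarith [hx.1], hx.2⟩
  rw [powerDensity, indicator_of_mem hx', abs_of_pos hx.1]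

lemma le_rpow (hl : l ≤ 1) {a x : ℝ} (ha : 0 < a) (hx : a ≤ |x|) :
    powerDensity l x ≤ a ^ (l - 1) := by
  by_cases hmem : x ∈ Icc (-1 : ℝ) 1
  · rw [powerDensity, indicator_of_mem hmem]
    exact Real.rpow_le_rpow_of_nonpos ha hx (by linarith)
  · rw [powerDensity, indicator_of_notMem hmem]
    positivity

lemma sub_mul_le (hl₁ : l₁ ≤ 1) (hl₂ : l₂ ≤ 1) {y : ℝ} (hy : y ≠ 0) (t : ℝ) :
    powerDensity l₁ (y - t) * powerDensity l₂ t ≤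
      (|y| / 2) ^ (l₁ - 1) * powerDensity l₂ t + (|y| / 2) ^ (l₂ - 1) * powerDensity l₁ (y - t) := by
  have ha : 0 < |y| / 2 := by positivity
  have h₁ := nonneg l₁ (y - t)
  have h₂ := nonneg l₂ t
  rcases le_or_gt |t| (|y| / 2) with ht | ht
  · have hyt : |y| / 2 ≤ |y - t| := by linarith [abs_sub_abs_le_abs_sub y t]
    have := mul_le_mul_of_nonneg_right (le_rpow hl₁ ha hyt) h₂
    have : 0 ≤ (|y| / 2) ^ (l₂ - 1) * powerDensity l₁ (y - t) := by positivity
    linarith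
  · have := mul_le_mul_of_nonneg_left (le_rpow hl₂ ha ht.le) h₁
    have : 0 ≤ (|y| / 2) ^ (l₁ - 1) * powerDensity l₂ t := by positivity
    linarith

lemma integrable_sub_mul (hl₁ : l₁ ∈ Ioc 0 1) (hl₂ : l₂ ∈ Ioc 0 1) {y : ℝ} (hy : y ≠ 0) :
    Integrable fun t => powerDensity l₁ (y - t) * powerDensity l₂ t := by
  have hdom : Integrable fun t =>
      (|y| / 2) ^ (l₁ - 1) * powerDensity l₂ t + (|y| / 2) ^ (l₂ - 1) * powerDensity l₁ (y - t) :=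
    ((integrable hl₂.1).const_mul _).add (((integrable hl₁.1).comp_sub_left y).const_mul _)
  refine hdom.mono' (by fun_prop) (ae_of_all _ fun t => ?_)
  rw [Real.norm_of_nonneg (mul_nonneg (nonneg _ _) (nonneg _ _))]
  exact sub_mul_le hl₁.2 hl₂.2 hy t

lemma rpow_le_integral_sub_mul (hl₁ : l₁ ∈ Ioc 0 1) (hl₂ : l₂ ∈ Ioc 0 1) {y : ℝ}
    (hy : y ∈ Ioc 0 1) :
    (l₂ * 2 ^ l₂)⁻¹ * y ^ (l₁ + l₂ - 1) ≤ ∫ t, powerDensity l₁ (y - t) * powerDensity l₂ t := by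
  obtain ⟨hy0, hy1⟩ := hy
  have hhalf : 0 ≤ y / 2 := by positivity
  have hint := integrable_sub_mul hl₁ hl₂ hy0.ne'
  have hpow : IntegrableOn (fun t : ℝ => y ^ (l₁ - 1) * t ^ (l₂ - 1)) (Ioc 0 (y / 2)) :=
    ((intervalIntegral.intervalIntegrable_rpow' (by linarith [hl₂.1])).1).const_mul _
  calc (l₂ * 2 ^ l₂)⁻¹ * y ^ (l₁ + l₂ - 1)
      = ∫ t in Ioc 0 (y / 2), y ^ (l₁ - 1) * t ^ (l₂ - 1) := by
        rw [integral_const_mul, ← intervalIntegral.integral_of_le hhalf,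
          integral_rpow (Or.inl (by linarith [hl₂.1])), sub_add_cancel,
          Real.zero_rpow hl₂.1.ne', sub_zero, Real.div_rpow hy0.le zero_le_two,
          show l₁ + l₂ - 1 = l₁ - 1 + l₂ by ring, Real.rpow_add hy0]
        field_simp
    _ ≤ ∫ t in Ioc 0 (y / 2), powerDensity l₁ (y - t) * powerDensity l₂ t := by
        refine setIntegral_mono_on hpow hint.integrableOn measurableSet_Ioc fun t ⟨ht0, hty⟩ => ?_
        have hyt : 0 < y - t := by linarith
        rw [eq_rpow ⟨ht0, by linarith⟩, eq_rpow ⟨hyt, by linarith⟩]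
        exact mul_le_mul_of_nonneg_right
          (Real.rpow_le_rpow_of_nonpos hyt (by linarith) (by linarith [hl₁.2])) (by positivity)
    _ ≤ ∫ t, powerDensity l₁ (y - t) * powerDensity l₂ t :=
        setIntegral_le_integral hint (ae_of_all _ fun t => mul_nonneg (nonneg _ _) (nonneg _ _))

lemma abs_rpow_le_integral_sub_mul (hl₁ : l₁ ∈ Ioc 0 1) (hl₂ : l₂ ∈ Ioc 0 1) {y : ℝ}
    (hy0 : y ≠ 0) (hy1 : |y| ≤ 1) :
    (l₂ * 2 ^ l₂)⁻¹ * |y| ^ (l₁ + l₂ - 1) ≤ ∫ t, powerDensity l₁ (y - t) * powerDensity l₂ t := by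
  rcases hy0.lt_or_gt with hy | hy
  · rw [abs_of_neg hy] at hy1 ⊢
    rw [← integral_comp_neg_sub_mul (neg l₁) (neg l₂)]
    exact rpow_le_integral_sub_mul hl₁ hl₂ ⟨by linarith, hy1⟩
  · rw [abs_of_pos hy] at hy1 ⊢
    exact rpow_le_integral_sub_mul hl₁ hl₂ ⟨hy, hy1⟩

end powerDensity

/-- Reverse Young in the model case: the convolution of two power-law densities
`|y|^{λⱼ-1}·1_{[-1,1]}` has a singularity of exponent exactly `λ₁+λ₂-1` at the origin,
so it is in `L^{1+ε}` only for `ε < (λ₁+λ₂)/(1-λ₁-λ₂)`. -/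
theorem stmt_13 (l₁ l₂ : ℝ) (hl₁ : l₁ ∈ Set.Ioo (0 : ℝ) 1) (hl₂ : l₂ ∈ Set.Ioo (0 : ℝ) 1)
    (hsum : l₁ + l₂ < 1)
    (g₁ g₂ : ℝ → ℝ)
    (hg₁ : g₁ = Set.indicator (Set.Icc (-1 : ℝ) 1) (fun y => |y| ^ (l₁ - 1)))
    (hg₂ : g₂ = Set.indicator (Set.Icc (-1 : ℝ) 1) (fun y => |y| ^ (l₂ - 1))) :
    (∃ c : ℝ, 0 < c ∧ ∀ y : ℝ, 0 < |y| → |y| ≤ 1 →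
      c * |y| ^ (l₁ + l₂ - 1) ≤ ∫ t : ℝ, g₁ (y - t) * g₂ t) ∧
    (∀ ε : ℝ, 0 < ε →
      MemLp (fun y : ℝ => ∫ t : ℝ, g₁ (y - t) * g₂ t) (ENNReal.ofReal (1 + ε)) volume →
      ε < (l₁ + l₂) / (1 - l₁ - l₂)) := by
  subst hg₁ hg₂
  have hc : 0 < (l₂ * 2 ^ l₂)⁻¹ := by have := hl₂.1; positivity
  have lower : ∀ y : ℝ, 0 < |y| → |y| ≤ 1 → (l₂ * 2 ^ l₂)⁻¹ * |y| ^ (l₁ + l₂ - 1) ≤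
      ∫ t, powerDensity l₁ (y - t) * powerDensity l₂ t := fun y hy0 hy1 =>
    powerDensity.abs_rpow_le_integral_sub_mul (Ioo_subset_Ioc_self hl₁) (Ioo_subset_Ioc_self hl₂)
      (abs_pos.mp hy0) hy1
  refine ⟨⟨_, hc, lower⟩, fun ε hε hmem => ?_⟩
  have hexp := neg_one_lt_mul_of_memLp_of_rpow_le hc (by linarith) hmem fun y ⟨hy0, hy1⟩ => by
    have := lower y (abs_pos.mpr hy0.ne') (by rw [abs_of_pos hy0]; exact hy1.le)
    rwa [abs_of_pos hy0] at this
  rw [lt_div_iff₀ (by linarith)]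
  nlinarith
end
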